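/- Let I_p = ∫₀^{π_p/2} sin_p t dt. Then I_p = ((p−1)^{2/p}/p) · B(2/p, 1 − 1/p), where B(r,s) = ∫₀¹ t^{r−1}(1−t)^{s−1} dt is the Euler Beta function. -/

import Mathlib

/-- The one-dimensional `p`-Laplacian nonlinearity `φ_p(s) = |s|^{p-2} s`. -/
noncomputable def phi (p s : ℝ) : ℝ := |s| ^ (p - 2) * s

/-- The `p`-analogue of `π`: `π_p = 2π (p-1)^{1/p} / (p sin(π/p))`. -/
noncomputable def pip (p : ℝ) : ℝ :=
  2 * Real.pi * (p - 1) ^ (1 / p) / (p * Real.sin (Real.pi / p))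

/-! On `[0, π_p/2]`, `sin_p` inverts the primitive `y ↦ ∫₀^y g` of
`g(s) = (1 - s^p/(p-1))^{-1/p}`, so `dt = g(s) ds` and `I_p = ∫₀^c s g(s) ds` with
`c = (p-1)^{1/p}`. The substitution `s = ((p-1)u)^{1/p}` turns `∫₀^c s^r g(s) ds` into
`((p-1)^{(r+1)/p}/p) B((r+1)/p, 1 - 1/p)`. For `r = 0` the reflection formula
`B(a, 1-a) = π / sin (π a)` shows `∫₀^c g = π_p/2`, i.e. `sin_p` runs exactly from `0`
to `c`; `r = 1` is the claim. -/

open MeasureTheory intervalIntegral Set Real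

theorem strictMonoOn_integral_of_pos {g : ℝ → ℝ} {a c : ℝ}
    (hgi : IntervalIntegrable g volume a c) (hpos : ∀ s ∈ Ioo a c, 0 < g s) :
    StrictMonoOn (fun y => ∫ s in a..y, g s) (Icc a c) := by
  intro x hx y hy hxy
  have hint : ∀ {u v}, u ∈ Icc a c → v ∈ Icc a c → IntervalIntegrable g volume u v :=
    fun hu hv => hgi.mono_set (uIcc_subset_uIcc (Icc_subset_uIcc hu) (Icc_subset_uIcc hv))
  have hpos_xy : 0 < ∫ s in x..y, g s :=
    intervalIntegral_pos_of_pos_on (hint hx hy)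
      (fun s hs => hpos s ⟨hx.1.trans_lt hs.1, hs.2.trans_le hy.2⟩) hxy
  have hsplit := integral_add_adjacent_intervals (hint (left_mem_Icc.2 (hx.1.trans hx.2)) hx)
    (hint hx hy)
  show ∫ s in a..x, g s < ∫ s in a..y, g s
  linarith

/-- Nonnegativity of `g` on all of `ℝ` is what keeps `S` inside `[0, c]`. -/
structure IsInvPrimitiveOn (g S : ℝ → ℝ) (c T : ℝ) : Prop where
  nonneg : ∀ s, 0 ≤ g s
  pos : ∀ s ∈ Ioo 0 c, 0 < g s
  integral_eq : ∫ s in 0..c, g s = T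
  integral_pos : 0 < T
  continuousOn : ContinuousOn S (Icc 0 T)
  apply_zero : S 0 = 0
  integral_comp : ∀ t ∈ Icc 0 T, ∫ s in 0..S t, g s = t

namespace IsInvPrimitiveOn

variable {g S : ℝ → ℝ} {c T : ℝ}

theorem intervalIntegrable (h : IsInvPrimitiveOn g S c T) : IntervalIntegrable g volume 0 c :=
  intervalIntegrable_of_integral_ne_zero (h.integral_eq ▸ h.integral_pos.ne')

theorem intervalIntegrable_comp (h : IsInvPrimitiveOn g S c T) {t : ℝ} (ht : t ∈ Ioc 0 T) :
    IntervalIntegrable g volume 0 (S t) :=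
  intervalIntegrable_of_integral_ne_zero
    ((h.integral_comp t (Ioc_subset_Icc_self ht)).symm ▸ ht.1.ne')

theorem integral_nonneg (h : IsInvPrimitiveOn g S c T) {a b : ℝ} (hab : a ≤ b) :
    0 ≤ ∫ s in a..b, g s :=
  intervalIntegral.integral_nonneg hab fun s _ => h.nonneg s

theorem endpoint_pos (h : IsInvPrimitiveOn g S c T) : 0 < c := by
  by_contra! hc
  have := h.integral_nonneg hc
  rw [integral_symm, h.integral_eq] at this
  linarith [h.integral_pos]

theorem mapsTo_Ico (h : IsInvPrimitiveOn g S c T) : MapsTo S (Ico 0 T) (Ico 0 c) := by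
  intro t ⟨ht0, htT⟩
  rcases ht0.eq_or_lt with rfl | ht0
  · simpa [h.apply_zero] using h.endpoint_pos
  have hSt := h.integral_comp t ⟨ht0.le, htT.le⟩
  constructor
  · by_contra! hneg
    have := h.integral_nonneg hneg.le
    rw [integral_symm] at hSt
    linarith
  · by_contra! hge
    have hint := h.intervalIntegrable_comp ⟨ht0, htT.le⟩
    have := integral_add_adjacent_intervals h.intervalIntegrable
      (hint.mono_set
        (uIcc_subset_uIcc (Icc_subset_uIcc ⟨h.endpoint_pos.le, hge⟩) right_mem_uIcc))
    linarith [h.integral_nonneg hge, h.integral_eq]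

theorem mapsTo (h : IsInvPrimitiveOn g S c T) : MapsTo S (Icc 0 T) (Icc 0 c) := by
  simpa [closure_Ico h.integral_pos.ne, closure_Ico h.endpoint_pos.ne] using
    h.mapsTo_Ico.closure_of_continuousOn
      (by simpa [closure_Ico h.integral_pos.ne] using h.continuousOn)

theorem strictMonoOn (h : IsInvPrimitiveOn g S c T) : StrictMonoOn S (Icc 0 T) := by
  intro a ha b hb hab
  refine ((strictMonoOn_integral_of_pos h.intervalIntegrable h.pos).lt_iff_lt
    (h.mapsTo ha) (h.mapsTo hb)).1 ?_
  simpa only [h.integral_comp a ha, h.integral_comp b hb] using hab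

theorem apply_endpoint (h : IsInvPrimitiveOn g S c T) : S T = c := by
  refine (strictMonoOn_integral_of_pos h.intervalIntegrable h.pos).injOn
    (h.mapsTo ⟨h.integral_pos.le, le_rfl⟩) ⟨h.endpoint_pos.le, le_rfl⟩ ?_
  simp only [h.integral_comp T ⟨h.integral_pos.le, le_rfl⟩, h.integral_eq]

theorem image_Ioo (h : IsInvPrimitiveOn g S c T) : S '' Ioo 0 T = Ioo 0 c := by
  rw [h.continuousOn.image_Ioo_of_strictMonoOn h.integral_pos.le h.strictMonoOn, h.apply_zero,
    h.apply_endpoint]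

theorem mul_deriv_eq_one (h : IsInvPrimitiveOn g S c T) (hg : ContinuousOn g (Ioo 0 c))
    {t S' : ℝ} (ht : t ∈ Ioo 0 T) (hS : HasDerivAt S S' t) : g (S t) * S' = 1 := by
  have hSt : S t ∈ Ioo 0 c := h.image_Ioo ▸ mem_image_of_mem S ht
  have hF : HasDerivAt (fun y => ∫ s in 0..y, g s) (g (S t)) (S t) :=
    integral_hasDerivAt_right (h.intervalIntegrable_comp ⟨ht.1, ht.2.le⟩)
      (hg.stronglyMeasurableAtFilter isOpen_Ioo _ hSt)
      (hg.continuousAt (isOpen_Ioo.mem_nhds hSt))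
  have hid : HasDerivAt (fun u => ∫ s in 0..S u, g s) 1 t := by
    refine (hasDerivAt_id t).congr_of_eventuallyEq ?_
    filter_upwards [Ioo_mem_nhds ht.1 ht.2] with u hu
    exact h.integral_comp u (Ioo_subset_Icc_self hu)
  exact (hF.comp t hS).unique hid

theorem integral_comp_eq (h : IsInvPrimitiveOn g S c T) (hg : ContinuousOn g (Ioo 0 c))
    {S' : ℝ → ℝ} (hS : ∀ t ∈ Ioo 0 T, HasDerivAt S (S' t) t) (f : ℝ → ℝ) :
    ∫ t in 0..T, f (S t) = ∫ x in 0..c, f x * g x := by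
  rw [integral_of_le h.integral_pos.le, integral_of_le h.endpoint_pos.le,
    integral_Ioc_eq_integral_Ioo, integral_Ioc_eq_integral_Ioo, ← h.image_Ioo,
    integral_image_eq_integral_abs_deriv_smul measurableSet_Ioo
      (fun t ht => (hS t ht).hasDerivWithinAt) (h.strictMonoOn.injOn.mono Ioo_subset_Icc_self)]
  refine setIntegral_congr_fun measurableSet_Ioo fun t ht => ?_
  have hone := h.mul_deriv_eq_one hg ht (hS t ht)
  have hg_pos : 0 < g (S t) := h.pos _ (h.image_Ioo ▸ mem_image_of_mem S ht)
  have hS'_pos : 0 < S' t := pos_of_mul_pos_right (hone ▸ one_pos) hg_pos.le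
  rw [smul_eq_mul, abs_of_pos hS'_pos]
  linear_combination -f (S t) * hone

end IsInvPrimitiveOn

theorem ofReal_integral_rpow_mul_one_sub_rpow (u v : ℝ) :
    ((∫ x in 0..1, x ^ (u - 1) * (1 - x) ^ (v - 1) : ℝ) : ℂ) = Complex.betaIntegral u v := by
  rw [Complex.betaIntegral, ← intervalIntegral.integral_ofReal]
  refine integral_congr fun x hx => ?_
  rw [uIcc_of_le zero_le_one] at hx
  push_cast
  rw [Complex.ofReal_cpow hx.1, Complex.ofReal_cpow (sub_nonneg.2 hx.2)]
  push_cast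
  rfl

theorem Complex.betaIntegral_one_sub {a : ℂ} (ha : 0 < a.re) (ha1 : a.re < 1) :
    Complex.betaIntegral a (1 - a) = π / Complex.sin (π * a) := by
  have h := Complex.Gamma_mul_Gamma_eq_betaIntegral (t := 1 - a) ha (by simpa using ha1)
  rwa [Complex.Gamma_mul_Gamma_one_sub, add_sub_cancel, Complex.Gamma_one, one_mul, eq_comm] at h

theorem integral_rpow_mul_one_sub_rpow_eq_pi_div_sin {a : ℝ} (ha : 0 < a) (ha1 : a < 1) :
    ∫ x in 0..1, x ^ (a - 1) * (1 - x) ^ ((1 - a) - 1) = π / Real.sin (π * a) := by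
  have h := ofReal_integral_rpow_mul_one_sub_rpow a (1 - a)
  rw [Complex.ofReal_sub, Complex.ofReal_one,
    Complex.betaIntegral_one_sub (by simpa) (by simpa)] at h
  exact_mod_cast h

noncomputable def arcsinpDeriv (p s : ℝ) : ℝ := (1 - s ^ p / (p - 1)) ^ (-(1 : ℝ) / p)

variable {p : ℝ}

theorem arcsinpDeriv_nonneg (hp : 2 ≤ p) (s : ℝ) : 0 ≤ arcsinpDeriv p s := by
  rcases le_or_gt 0 (1 - s ^ p / (p - 1)) with hb | hb
  · exact rpow_nonneg hb _
  · -- `Real.rpow` of a negative base carries the factor `cos (π / p)`, nonnegative as `p ≥ 2`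
    rw [arcsinpDeriv, rpow_def_of_neg hb, show -(1 : ℝ) / p * π = -(π / p) by ring, cos_neg]
    have hcos : 0 ≤ cos (π / p) := cos_nonneg_of_mem_Icc
      ⟨by linarith [pi_pos, div_nonneg pi_pos.le (by linarith : (0 : ℝ) ≤ p)],
        div_le_div_of_nonneg_left pi_pos.le two_pos hp⟩
    positivity

theorem one_sub_rpow_div_pos (hp : 1 < p) {s : ℝ} (hs : s ∈ Ico 0 ((p - 1) ^ (1 / p))) :
    0 < 1 - s ^ p / (p - 1) := by
  have hlt := rpow_lt_rpow hs.1 hs.2 (by linarith : 0 < p)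
  rw [one_div, rpow_inv_rpow (by linarith) (by linarith)] at hlt
  rwa [sub_pos, div_lt_one (by linarith)]

theorem arcsinpDeriv_pos (hp : 1 < p) {s : ℝ} (hs : s ∈ Ico 0 ((p - 1) ^ (1 / p))) :
    0 < arcsinpDeriv p s :=
  rpow_pos_of_pos (one_sub_rpow_div_pos hp hs) _

theorem continuousOn_arcsinpDeriv (hp : 1 < p) :
    ContinuousOn (arcsinpDeriv p) (Ico 0 ((p - 1) ^ (1 / p))) := by
  intro s hs
  have hpow : ContinuousAt (fun x : ℝ => x ^ p) s :=
    continuousAt_rpow_const s p (Or.inr (by linarith))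
  exact ((continuousAt_const.sub (hpow.div_const _)).rpow_const
    (Or.inl (one_sub_rpow_div_pos hp hs).ne')).continuousWithinAt

theorem pip_pos (hp : 1 < p) : 0 < pip p := by
  have hsin : 0 < sin (π / p) := sin_pos_of_pos_of_lt_pi (by positivity)
    (div_lt_self pi_pos hp)
  have : 0 < (p - 1) ^ (1 / p) := rpow_pos_of_pos (by linarith) _
  unfold pip
  positivity

theorem arcsinpDeriv_rpow_one_div (hp : 1 < p) {u : ℝ} (hu : 0 ≤ u) :
    arcsinpDeriv p (((p - 1) * u) ^ (1 / p)) = (1 - u) ^ ((1 - 1 / p) - 1) := by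
  rw [arcsinpDeriv, one_div, rpow_inv_rpow (by nlinarith) (by linarith),
    mul_div_cancel_left₀ _ (by linarith : p - 1 ≠ 0)]
  ring_nf

theorem abs_deriv_mul_rpow_mul_arcsinpDeriv (hp : 1 < p) (r : ℝ) {u : ℝ} (hu : 0 < u) :
    |1 / p * ((p - 1) * u) ^ (1 / p - 1) * (p - 1)| *
        ((((p - 1) * u) ^ (1 / p)) ^ r * arcsinpDeriv p (((p - 1) * u) ^ (1 / p)))
      = (p - 1) ^ ((r + 1) / p) / p * (u ^ ((r + 1) / p - 1) * (1 - u) ^ ((1 - 1 / p) - 1)) := by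
  have hp1 : 0 < p - 1 := by linarith
  have hb : 0 < (p - 1) * u := mul_pos hp1 hu
  have hpow : ((p - 1) * u) ^ (1 / p - 1) * (((p - 1) * u) ^ (1 / p)) ^ r
      = (p - 1) ^ ((r + 1) / p - 1) * u ^ ((r + 1) / p - 1) := by
    rw [← rpow_mul hb.le, ← rpow_add hb, mul_rpow hp1.le hu.le]
    ring_nf
  have hconst : (p - 1) * (p - 1) ^ ((r + 1) / p - 1) = (p - 1) ^ ((r + 1) / p) := by
    rw [mul_comm, ← rpow_add_one hp1.ne', sub_add_cancel]
  rw [abs_of_pos (by positivity), arcsinpDeriv_rpow_one_div hp hu.le]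
  linear_combination (p - 1) / p * (1 - u) ^ ((1 - 1 / p) - 1) * hpow
    + u ^ ((r + 1) / p - 1) * (1 - u) ^ ((1 - 1 / p) - 1) / p * hconst

theorem integral_rpow_mul_arcsinpDeriv (hp : 1 < p) (r : ℝ) :
    ∫ x in 0..(p - 1) ^ (1 / p), x ^ r * arcsinpDeriv p x
      = (p - 1) ^ ((r + 1) / p) / p *
          ∫ u in 0..1, u ^ ((r + 1) / p - 1) * (1 - u) ^ ((1 - 1 / p) - 1) := by
  have hp1 : 0 < p - 1 := by linarith
  set θ : ℝ → ℝ := fun u => ((p - 1) * u) ^ (1 / p)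
  have hθ_mono : StrictMonoOn θ (Icc 0 1) := fun a ha b _ hab =>
    rpow_lt_rpow (mul_nonneg hp1.le ha.1) (mul_lt_mul_of_pos_left hab hp1) (by positivity)
  have hθ_image : θ '' Ioo 0 1 = Ioo 0 ((p - 1) ^ (1 / p)) := by
    have hθ_cont : ContinuousOn θ (Icc 0 1) :=
      ((continuous_rpow_const (by positivity)).comp (continuous_const_mul _)).continuousOn
    rw [hθ_cont.image_Ioo_of_strictMonoOn zero_le_one hθ_mono]
    simp [θ, zero_rpow (inv_ne_zero (by linarith : p ≠ 0))]
  have hθ_deriv : ∀ u ∈ Ioo (0 : ℝ) 1,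
      HasDerivWithinAt θ (1 / p * ((p - 1) * u) ^ (1 / p - 1) * (p - 1)) (Ioo 0 1) u := by
    intro u hu
    exact ((hasDerivAt_rpow_const (Or.inl (mul_pos hp1 hu.1).ne')).comp u
      ((hasDerivAt_id u).const_mul (p - 1) |>.congr_deriv (mul_one _))).hasDerivWithinAt
  rw [integral_of_le (by positivity), integral_of_le zero_le_one, integral_Ioc_eq_integral_Ioo,
    integral_Ioc_eq_integral_Ioo, ← hθ_image, integral_image_eq_integral_abs_deriv_smul
      measurableSet_Ioo hθ_deriv (hθ_mono.injOn.mono Ioo_subset_Icc_self),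
    ← MeasureTheory.integral_const_mul]
  exact setIntegral_congr_fun measurableSet_Ioo fun u hu =>
    abs_deriv_mul_rpow_mul_arcsinpDeriv hp r hu.1

theorem integral_arcsinpDeriv (hp : 1 < p) :
    ∫ x in 0..(p - 1) ^ (1 / p), arcsinpDeriv p x = pip p / 2 := by
  have hsin : 0 < sin (π / p) := sin_pos_of_pos_of_lt_pi (by positivity) (div_lt_self pi_pos hp)
  have h := integral_rpow_mul_arcsinpDeriv hp 0
  simp only [rpow_zero, one_mul, zero_add] at h
  rw [h, integral_rpow_mul_one_sub_rpow_eq_pi_div_sin (by positivity)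
    ((div_lt_one (by linarith)).2 hp), mul_one_div, pip]
  field_simp

theorem Ip_eq_beta_general
    (p : ℝ) (S S' : ℝ → ℝ)
    (hp : 2 ≤ p)
    (hS : ∀ t, HasDerivAt S (S' t) t)
    (hS0 : S 0 = 0)
    (hSimp : ∀ t ∈ Set.Icc (0 : ℝ) (pip p / 2),
      ∫ s in (0 : ℝ)..(S t), (1 - s ^ p / (p - 1)) ^ (-(1 : ℝ) / p) = t) :
    ∫ t in (0 : ℝ)..(pip p / 2), S t
      = ((p - 1) ^ (2 / p) / p) *
        ∫ t in (0 : ℝ)..1, t ^ (2 / p - 1) * (1 - t) ^ ((1 - 1 / p) - 1) := by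
  have hp1 : 1 < p := by linarith
  have hS_inv : IsInvPrimitiveOn (arcsinpDeriv p) S ((p - 1) ^ (1 / p)) (pip p / 2) :=
    { nonneg := arcsinpDeriv_nonneg hp
      pos := fun s hs => arcsinpDeriv_pos hp1 (Ioo_subset_Ico_self hs)
      integral_eq := integral_arcsinpDeriv hp1
      integral_pos := half_pos (pip_pos hp1)
      continuousOn := fun t _ => (hS t).continuousAt.continuousWithinAt
      apply_zero := hS0
      integral_comp := hSimp }
  calc ∫ t in (0 : ℝ)..(pip p / 2), S t
      = ∫ x in (0 : ℝ)..(p - 1) ^ (1 / p), x ^ (1 : ℝ) * arcsinpDeriv p x := by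
        simpa only [rpow_one, id] using hS_inv.integral_comp_eq
          ((continuousOn_arcsinpDeriv hp1).mono Ioo_subset_Ico_self) (fun t _ => hS t) id
    _ = _ := by rw [integral_rpow_mul_arcsinpDeriv hp1, one_add_one_eq_two]

/-- **Lemma 2.2' / Lemma on `I_p`.** Let `S = sin_p` be the solution of
`(φ_p(S'))' + φ_p(S) = 0`, `S(0) = 0`, `S'(0) = 1`, implicitly given on `[0, π_p/2]` by
`∫₀^{sin_p t} ds/(1 − s^p/(p−1))^{1/p} = t`.  Then
`I_p = ∫₀^{π_p/2} sin_p t dt = ((p−1)^{2/p}/p) · B(2/p, 1 − 1/p)` where `B` is the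
Euler Beta function `B(r,s) = ∫₀¹ t^{r−1}(1−t)^{s−1} dt`. -/
theorem Ip_eq_beta
    (p : ℝ) (S S' : ℝ → ℝ)
    (hp : 2 ≤ p)
    (hS : ∀ t, HasDerivAt S (S' t) t)
    (hSode : ∀ t, HasDerivAt (fun s => phi p (S' s)) (-phi p (S t)) t)
    (hS0 : S 0 = 0) (hS'0 : S' 0 = 1)
    (hSper : Function.Periodic S (2 * pip p)) (hSodd : ∀ t, S (-t) = -S t)
    (hSimp : ∀ t ∈ Set.Icc (0 : ℝ) (pip p / 2),
      ∫ s in (0 : ℝ)..(S t), (1 - s ^ p / (p - 1)) ^ (-(1 : ℝ) / p) = t) :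
    ∫ t in (0 : ℝ)..(pip p / 2), S t
      = ((p - 1) ^ (2 / p) / p) *
        ∫ t in (0 : ℝ)..1, t ^ (2 / p - 1) * (1 - t) ^ ((1 - 1 / p) - 1) :=
  Ip_eq_beta_general p S S' hp hS hS0 hSimp
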